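/- Let X and Y be real Hilbert spaces, A, V : X → Y bounded linear operators, G : X → ℝ a γ_G-strongly convex function and F* : Y → ℝ a γ_{F*}-strongly convex function, with γ_G · γ_{F*} > (1/4)·‖A − V‖². Suppose for i = 1, 2 there are x_i ∈ X, y_i ∈ Y, g_i ∈ X, f_i ∈ Y such that g_i is a subgradient of G at x_i, f_i is a subgradient of F* at y_i, g_i + V*(y_i) = 0, and f_i = A(x_i). Then x₁ = x₂ and y₁ = y₂. -/

import Mathlib

open scoped RealInnerProductSpace

/-- `g` is a subgradient of `f` at `x`. -/
def IsSubgradientAt {E : Type*} [NormedAddCommGroup E] [InnerProductSpace ℝ E]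
    (f : E → ℝ) (g x : E) : Prop :=
  ∀ z, f x + ⟪g, z - x⟫ ≤ f z

/-- `f` is `γ`-strongly convex: `x ↦ f x − (γ/2)‖x‖²` is convex. -/
def IsStronglyConvex {E : Type*} [NormedAddCommGroup E] [InnerProductSpace ℝ E]
    (γ : ℝ) (f : E → ℝ) : Prop :=
  0 < γ ∧ ConvexOn ℝ Set.univ (fun x => f x - γ / 2 * ‖x‖ ^ 2)

/-!
If `g` is a subgradient of a `γ`-strongly convex `f` at `x`, then `g - γ x` is a subgradient of
the convex function `f - (γ/2)‖·‖²` at `x`; monotonicity of the latter's subgradients makes `∂G`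
and `∂F*` strongly monotone with moduli `γ_G` and `γ_{F*}`. For two solutions, with
`d = x₁ - x₂` and `e = y₁ - y₂`, the optimality relations turn the two monotonicity inequalities
into `γ_G ‖d‖² + γ_{F*} ‖e‖² ≤ ⟪(A - V) d, e⟫ ≤ ‖A - V‖ ‖d‖ ‖e‖`: of the coupling
terms only the mismatch `A - V` survives. The quadratic form
`γ_G a² - ‖A - V‖ a b + γ_{F*} b²` is positive definite exactly when `‖A - V‖² < 4 γ_G γ_{F*}`,
so `d = 0` and `e = 0`.
-/

open Set Filter Topology

lemma le_of_forall_mem_Ioc_le_add_mul {a b c : ℝ} (h : ∀ t ∈ Ioc (0 : ℝ) 1, a ≤ b + t * c) :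
    a ≤ b := by
  have hlim : Tendsto (fun t : ℝ => b + t * c) (𝓝[>] 0) (𝓝 b) :=
    tendsto_nhdsWithin_of_tendsto_nhds <|
      (by fun_prop : Continuous fun t : ℝ => b + t * c).tendsto' 0 b (by simp)
  exact ge_of_tendsto hlim (eventually_of_mem (Ioc_mem_nhdsGT one_pos) h)

lemma eq_zero_of_mul_sq_add_mul_sq_le_mul {α β N a b : ℝ} (hα : 0 < α) (hN : N ^ 2 < 4 * (α * β))
    (h : α * a ^ 2 + β * b ^ 2 ≤ N * a * b) : a = 0 ∧ b = 0 := by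
  -- `4α (α a² + β b² - N a b) = (2α a - N b)² + (4αβ - N²) b²`
  have hb : b = 0 := by
    by_contra hb
    have hb2 : 0 < b ^ 2 := by positivity
    nlinarith [sq_nonneg (2 * α * a - N * b), mul_pos (sub_pos.2 hN) hb2]
  subst hb
  refine ⟨?_, rfl⟩
  by_contra ha
  have : 0 < α * a ^ 2 := by positivity
  simp only [ne_eq, OfNat.ofNat_ne_zero, not_false_eq_true, zero_pow, mul_zero] at h
  linarith

section Subgradient

variable {E : Type*} [NormedAddCommGroup E] [InnerProductSpace ℝ E]

lemma IsSubgradientAt.inner_sub_sub_nonneg {f : E → ℝ} {g₁ g₂ x₁ x₂ : E}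
    (h₁ : IsSubgradientAt f g₁ x₁) (h₂ : IsSubgradientAt f g₂ x₂) :
    0 ≤ ⟪g₁ - g₂, x₁ - x₂⟫ := by
  have h₁₂ := h₁ x₂
  have h₂₁ := h₂ x₁
  rw [← neg_sub x₁ x₂, inner_neg_right] at h₁₂
  rw [inner_sub_left]
  linarith

lemma IsSubgradientAt.sub_smul_of_convexOn {f : E → ℝ} {γ : ℝ} {g x : E}
    (hf : ConvexOn ℝ univ fun y => f y - γ / 2 * ‖y‖ ^ 2) (hg : IsSubgradientAt f g x) :
    IsSubgradientAt (fun y => f y - γ / 2 * ‖y‖ ^ 2) (g - γ • x) x := by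
  intro z
  obtain ⟨d, rfl⟩ : ∃ d, z = x + d := ⟨z - x, (add_sub_cancel x z).symm⟩
  refine le_of_forall_mem_Ioc_le_add_mul (c := γ / 2 * ‖d‖ ^ 2) fun t ⟨ht₀, ht₁⟩ => ?_
  have hseg : (1 - t) • x + t • (x + d) = x + t • d := by module
  have hconv := hf.2 (mem_univ x) (mem_univ (x + d)) (sub_nonneg.2 ht₁) ht₀.le
    (sub_add_cancel 1 t)
  have hsub := hg (x + t • d)
  have hnorm (s : ℝ) : ‖x + s • d‖ ^ 2 = ‖x‖ ^ 2 + 2 * s * ⟪x, d⟫ + s ^ 2 * ‖d‖ ^ 2 := by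
    rw [norm_add_sq_real, real_inner_smul_right, norm_smul, mul_pow, Real.norm_eq_abs, sq_abs]
    ring
  have hnorm₁ := hnorm 1
  rw [one_smul] at hnorm₁
  rw [hseg, smul_eq_mul, smul_eq_mul] at hconv
  rw [add_sub_cancel_left, real_inner_smul_right] at hsub
  dsimp only at hconv ⊢
  rw [hnorm, hnorm₁] at hconv
  rw [add_sub_cancel_left, inner_sub_left, real_inner_smul_left, hnorm₁]
  -- after dividing by `t`, convexity along `[x, x + d]` and the subgradient inequality at
  -- `x + t d` combine to the claim up to the error `t γ/2 ‖d‖²`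
  refine le_of_mul_le_mul_left ?_ ht₀
  linarith

lemma IsSubgradientAt.mul_norm_sq_le_inner_sub {f : E → ℝ} {γ : ℝ} {g₁ g₂ x₁ x₂ : E}
    (hf : ConvexOn ℝ univ fun y => f y - γ / 2 * ‖y‖ ^ 2)
    (h₁ : IsSubgradientAt f g₁ x₁) (h₂ : IsSubgradientAt f g₂ x₂) :
    γ * ‖x₁ - x₂‖ ^ 2 ≤ ⟪g₁ - g₂, x₁ - x₂⟫ := by
  have hmono := (h₁.sub_smul_of_convexOn hf).inner_sub_sub_nonneg (h₂.sub_smul_of_convexOn hf)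
  rwa [show g₁ - γ • x₁ - (g₂ - γ • x₂) = (g₁ - g₂) - γ • (x₁ - x₂) by module,
    inner_sub_left, real_inner_smul_left, real_inner_self_eq_norm_sq, sub_nonneg] at hmono

end Subgradient

/-- Uniqueness of solutions of the mismatched optimality inclusion
`0 ∈ ∂G(x̂) + V*ŷ`, `0 ∈ ∂F*(ŷ) − Ax̂` under strong convexity with
`γ_G γ_{F*} > ‖A − V‖²/4`. -/
theorem pddr_mismatch_fixed_point_unique
    {X Y : Type*} [NormedAddCommGroup X] [InnerProductSpace ℝ X] [CompleteSpace X]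
    [NormedAddCommGroup Y] [InnerProductSpace ℝ Y] [CompleteSpace Y]
    (A V : X →L[ℝ] Y) (G : X → ℝ) (Fs : Y → ℝ) (γG γFs : ℝ)
    (hG : IsStronglyConvex γG G) (hFs : IsStronglyConvex γFs Fs)
    (hcond : (1 / 4) * ‖A - V‖ ^ 2 < γG * γFs)
    (x₁ x₂ g₁ g₂ : X) (y₁ y₂ : Y) (f₁ f₂ : Y)
    (hg₁ : IsSubgradientAt G g₁ x₁) (hg₂ : IsSubgradientAt G g₂ x₂)
    (hf₁ : IsSubgradientAt Fs f₁ y₁) (hf₂ : IsSubgradientAt Fs f₂ y₂)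
    (he₁ : g₁ + (ContinuousLinearMap.adjoint V) y₁ = 0)
    (he₂ : g₂ + (ContinuousLinearMap.adjoint V) y₂ = 0)
    (hh₁ : f₁ = A x₁) (hh₂ : f₂ = A x₂) :
    x₁ = x₂ ∧ y₁ = y₂ := by
  have hmonoG := hg₁.mul_norm_sq_le_inner_sub hG.2 hg₂
  have hmonoFs := hf₁.mul_norm_sq_le_inner_sub hFs.2 hf₂
  have hg : g₁ - g₂ = -(ContinuousLinearMap.adjoint V) (y₁ - y₂) := by
    rw [eq_neg_of_add_eq_zero_left he₁, eq_neg_of_add_eq_zero_left he₂, map_sub]; abel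
  rw [hg, inner_neg_left, ContinuousLinearMap.adjoint_inner_left, real_inner_comm] at hmonoG
  rw [hh₁, hh₂, ← map_sub] at hmonoFs
  have hcoupling : γG * ‖x₁ - x₂‖ ^ 2 + γFs * ‖y₁ - y₂‖ ^ 2
      ≤ ‖A - V‖ * ‖x₁ - x₂‖ * ‖y₁ - y₂‖ :=
    calc _ ≤ ⟪(A - V) (x₁ - x₂), y₁ - y₂⟫ := by
          rw [sub_apply, inner_sub_left]; linarith
      _ ≤ ‖(A - V) (x₁ - x₂)‖ * ‖y₁ - y₂‖ := real_inner_le_norm _ _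
      _ ≤ ‖A - V‖ * ‖x₁ - x₂‖ * ‖y₁ - y₂‖ := by gcongr; exact (A - V).le_opNorm _
  obtain ⟨hx, hy⟩ := eq_zero_of_mul_sq_add_mul_sq_le_mul hG.1 (by linarith) hcoupling
  exact ⟨sub_eq_zero.1 (norm_eq_zero.1 hx), sub_eq_zero.1 (norm_eq_zero.1 hy)⟩
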